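/- arXiv:1602.05617 — 2 statements merged into one kernel-verified Lean document; each statement's English description precedes it below -/
import Mathlib

section
/- For all a, b, u, v, w > 0 with u + v ≤ w + 1/2 and w > 1/2, the sequence n ↦ Γ(an+u)·Γ(bn+v)/Γ((a+b)n+w) is bounded over natural numbers n. -/
/-- A convex function satisfies `φ x + φ y ≤ φ c + φ (x + y - c)` when `c ≤ x, y`. -/
lemma convex_superadd {S : Set ℝ} {φ : ℝ → ℝ} (hφ : ConvexOn ℝ S φ)
    {c x y : ℝ} (hc : c ∈ S) (hd : x + y - c ∈ S) (hcx : c ≤ x) (hcy : c ≤ y) :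
    φ x + φ y ≤ φ c + φ (x + y - c) := by
  set d := x + y - c with hdef
  rcases eq_or_lt_of_le (show c ≤ d by linarith) with h | h
  · have hx : x = c := by linarith [hcx, hcy]
    have hy : y = c := by linarith [hcx, hcy]
    rw [hx, hy, ← h]
  · set t := (y - c) / (d - c) with ht
    have hdc : 0 < d - c := by linarith
    have ht0 : 0 ≤ t := div_nonneg (by linarith) hdc.le
    have ht1 : t ≤ 1 := by
      rw [div_le_one hdc]; linarith
    have hx : x = t • c + (1 - t) • d := by
      simp only [smul_eq_mul, ht]
      field_simp
      ring
    have hy : y = (1 - t) • c + t • d := by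
      simp only [smul_eq_mul, ht]
      field_simp
      ring
    have h1 := hφ.2 hc hd ht0 (by linarith : (0:ℝ) ≤ 1 - t) (by ring)
    have h2 := hφ.2 hc hd (by linarith : (0:ℝ) ≤ 1 - t) ht0 (by ring)
    rw [hx, hy]
    calc φ (t • c + (1 - t) • d) + φ ((1 - t) • c + t • d)
        ≤ (t * φ c + (1 - t) * φ d) + ((1 - t) * φ c + t * φ d) := add_le_add h1 h2
      _ = φ c + φ d := by ring

/-- Gamma inequality: for `x, y ≥ 1/2`, `Γ x * Γ y ≤ Γ (1/2) * Γ (x + y - 1/2)`. -/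
lemma Gamma_mul_Gamma_le {x y : ℝ} (hx : 1/2 ≤ x) (hy : 1/2 ≤ y) :
    Real.Gamma x * Real.Gamma y ≤ Real.Gamma (1/2) * Real.Gamma (x + y - 1/2) := by
  have hx0 : (0:ℝ) < x := by linarith
  have hy0 : (0:ℝ) < y := by linarith
  have hd0 : (0:ℝ) < x + y - 1/2 := by linarith
  have key := convex_superadd Real.convexOn_log_Gamma
    (show (1/2 : ℝ) ∈ Set.Ioi (0:ℝ) by norm_num)
    (show x + y - 1/2 ∈ Set.Ioi (0:ℝ) from hd0) hx hy
  simp only [Function.comp] at key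
  have h1 := Real.Gamma_pos_of_pos hx0
  have h2 := Real.Gamma_pos_of_pos hy0
  have h3 := Real.Gamma_pos_of_pos (by norm_num : (0:ℝ) < 1/2)
  have h4 := Real.Gamma_pos_of_pos hd0
  calc Real.Gamma x * Real.Gamma y
      = Real.exp (Real.log (Real.Gamma x) + Real.log (Real.Gamma y)) := by
        rw [Real.exp_add, Real.exp_log h1, Real.exp_log h2]
    _ ≤ Real.exp (Real.log (Real.Gamma (1/2)) + Real.log (Real.Gamma (x + y - 1/2))) :=
        Real.exp_le_exp.mpr key
    _ = Real.Gamma (1/2) * Real.Gamma (x + y - 1/2) := by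
        rw [Real.exp_add, Real.exp_log h3, Real.exp_log h4]

/-- Eventual bound gives a global bound for sequences. -/
lemma bdd_of_eventually (f : ℕ → ℝ) :
    ∀ N : ℕ, ∀ C : ℝ, (∀ n, N ≤ n → f n ≤ C) → ∃ C', ∀ n, f n ≤ C' := by
  intro N
  induction N with
  | zero => exact fun C h => ⟨C, fun n => h n (Nat.zero_le n)⟩
  | succ N ih =>
    intro C h
    refine ih (max C (f N)) (fun n hn => ?_)
    rcases eq_or_lt_of_le hn with h' | h'
    · exact h'.symm ▸ le_max_right _ _
    · exact le_trans (h n h') (le_max_left _ _)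

/-- For all `a, b, u, v, w > 0` with `u + v ≤ w + 1/2` and `w > 1/2`, the
sequence `n ↦ Γ(an+u)·Γ(bn+v)/Γ((a+b)n+w)` is bounded over natural numbers `n`. -/
theorem stmt_0 (a b u v w : ℝ) (ha : 0 < a) (hb : 0 < b) (hu : 0 < u) (hv : 0 < v)
    (hw0 : 0 < w) (huv : u + v ≤ w + 1 / 2) (hw : 1 / 2 < w) :
    ∃ C : ℝ, ∀ n : ℕ,
      Real.Gamma (a * n + u) * Real.Gamma (b * n + v) / Real.Gamma ((a + b) * n + w) ≤ C := by
  -- choose N large enough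
  obtain ⟨N, hN⟩ := exists_nat_gt (max (1 / (2 * a)) (max (1 / (2 * b)) (5 / (2 * (a + b)))))
  apply bdd_of_eventually _ N (Real.Gamma (1/2))
  intro n hn
  have hnN : (N : ℝ) ≤ n := Nat.cast_le.mpr hn
  have h1 : 1 / (2 * a) < (n : ℝ) := lt_of_le_of_lt (le_max_left _ _) hN |>.trans_le hnN
  have h2 : 1 / (2 * b) < (n : ℝ) :=
    lt_of_le_of_lt ((le_max_left _ _).trans (le_max_right _ _)) hN |>.trans_le hnN
  have h3 : 5 / (2 * (a + b)) < (n : ℝ) :=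
    lt_of_le_of_lt ((le_max_right _ _).trans (le_max_right _ _)) hN |>.trans_le hnN
  have hx : (1/2 : ℝ) ≤ a * n + u := by
    rw [div_lt_iff₀ (by positivity)] at h1
    nlinarith
  have hy : (1/2 : ℝ) ≤ b * n + v := by
    rw [div_lt_iff₀ (by positivity)] at h2
    nlinarith
  have hz : (5/2 : ℝ) ≤ (a + b) * n := by
    rw [div_lt_iff₀ (by positivity)] at h3
    nlinarith
  have hsum : a * n + u + (b * n + v) - 1/2 = (a + b) * n + (u + v) - 1/2 := by ring
  have hmono : Real.Gamma ((a + b) * n + (u + v) - 1/2) ≤ Real.Gamma ((a + b) * n + w) := by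
    rcases eq_or_lt_of_le (show (a + b) * n + (u + v) - 1/2 ≤ (a + b) * n + w by linarith) with h | h
    · rw [h]
    · exact le_of_lt (Real.Gamma_strictMonoOn_Ici (by simp [Set.mem_Ici]; linarith)
        (by simp [Set.mem_Ici]; linarith) h)
  have hGw : 0 < Real.Gamma ((a + b) * n + w) := Real.Gamma_pos_of_pos (by positivity)
  rw [div_le_iff₀ hGw]
  calc Real.Gamma (a * n + u) * Real.Gamma (b * n + v)
      ≤ Real.Gamma (1/2) * Real.Gamma (a * n + u + (b * n + v) - 1/2) :=
        Gamma_mul_Gamma_le hx hy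
    _ = Real.Gamma (1/2) * Real.Gamma ((a + b) * n + (u + v) - 1/2) := by rw [hsum]
    _ ≤ Real.Gamma (1/2) * Real.Gamma ((a + b) * n + w) := by
        exact mul_le_mul_of_nonneg_left hmono (Real.Gamma_pos_of_pos (by norm_num)).le
end

section
/- Let H ∈ (0,1/2) and define V_{ε,δ}^{2H}(r) = (1/(4εδ))·(|r+ε+δ|^{2H} + |r−ε−δ|^{2H} − |r−ε+δ|^{2H} − |r+ε−δ|^{2H}). Then there exists a constant C_H > 0 such that for all r > 0 and all ε ≥ δ > 0 with r ≥ 4ε, one has |V_{ε,δ}^{2H}(r)| ≤ C_H · r^{2H−2}. -/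
/-- The second-order difference quotient `V_{ε,δ}^{2H}(r)` of `r ↦ |r|^{2H}`. -/
noncomputable def Vquot (H ε δ r : ℝ) : ℝ :=
  (1 / (4 * ε * δ)) * (|r + ε + δ| ^ (2 * H) + |r - ε - δ| ^ (2 * H)
    - |r - ε + δ| ^ (2 * H) - |r + ε - δ| ^ (2 * H))

private lemma hasDerivAt_shift (p a : ℝ) {x : ℝ} (hx : 0 < x + a) :
    HasDerivAt (fun y => (y + a) ^ p) (p * (x + a) ^ (p - 1)) x := by
  have h1 : HasDerivAt (fun y : ℝ => y + a) 1 x := (hasDerivAt_id x).add_const a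
  have h2 := (Real.hasDerivAt_rpow_const (x := x + a) (p := p) (Or.inl hx.ne')).comp x h1
  simpa [Function.comp_def] using h2

/-- For `H ∈ (0,1/2)` there is `C_H > 0` such that for all `r > 0` and all
`ε ≥ δ > 0` with `r ≥ 4ε`, `|V_{ε,δ}^{2H}(r)| ≤ C_H · r^{2H−2}`. -/
theorem stmt_4 (H : ℝ) (hH : H ∈ Set.Ioo (0 : ℝ) (1 / 2)) :
    ∃ C : ℝ, 0 < C ∧ ∀ r ε δ : ℝ, 0 < r → 0 < δ → δ ≤ ε → 4 * ε ≤ r →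
      |Vquot H ε δ r| ≤ C * r ^ (2 * H - 2) := by
  obtain ⟨hH0, hH2⟩ := hH
  set p : ℝ := 2 * H with hp
  have hp0 : 0 < p := by simp only [hp]; linarith
  have hp1 : p < 1 := by simp only [hp]; linarith
  have hC2 : (0:ℝ) < (2:ℝ) ^ (2 - p) := Real.rpow_pos_of_pos (by norm_num) _
  refine ⟨p * (1 - p) * 2 ^ (2 - p), mul_pos (mul_pos hp0 (by linarith)) hC2, ?_⟩
  intro r ε δ hr hδ hδε hεr
  have hε : 0 < ε := hδ.trans_le hδε
  have hr2 : 0 < r / 2 := by linarith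
  have hle2 : r / 2 ≤ r - ε - δ := by linarith
  -- First mean value theorem
  set f : ℝ → ℝ := fun x => (x + δ) ^ p - (x - δ) ^ p with hf
  have hderiv : ∀ x ∈ Set.Icc (r - ε) (r + ε),
      HasDerivAt f (p * (x + δ) ^ (p - 1) - p * (x - δ) ^ (p - 1)) x := by
    intro x hx
    have hx1 : 0 < x + δ := by have := hx.1; linarith
    have hx2 : 0 < x + (-δ) := by have := hx.1; linarith
    have h1 := hasDerivAt_shift p δ hx1
    have h2 := hasDerivAt_shift p (-δ) hx2
    simp only [← sub_eq_add_neg] at h2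
    exact h1.sub h2
  have hab : r - ε < r + ε := by linarith
  obtain ⟨c, hc, hceq⟩ := exists_hasDerivAt_eq_slope f
      (fun x => p * (x + δ) ^ (p - 1) - p * (x - δ) ^ (p - 1)) hab
      (fun x hx => (hderiv x hx).continuousAt.continuousWithinAt)
      (fun x hx => hderiv x (Set.mem_Icc_of_Ioo hx))
  -- Second mean value theorem
  have hcδ : r / 2 < c - δ := by have := hc.1; linarith
  have hderiv2 : ∀ y ∈ Set.Icc (c - δ) (c + δ),
      HasDerivAt (fun y : ℝ => y ^ (p - 1)) ((p - 1) * y ^ (p - 1 - 1)) y := by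
    intro y hy
    have hy0 : 0 < y := by have := hy.1; linarith
    exact Real.hasDerivAt_rpow_const (Or.inl hy0.ne')
  have hab2 : c - δ < c + δ := by linarith
  obtain ⟨ξ, hξ, hξeq⟩ := exists_hasDerivAt_eq_slope (fun y : ℝ => y ^ (p - 1))
      (fun y => (p - 1) * y ^ (p - 1 - 1)) hab2
      (fun y hy => (hderiv2 y hy).continuousAt.continuousWithinAt)
      (fun y hy => hderiv2 y (Set.mem_Icc_of_Ioo hy))
  have hξr : r / 2 < ξ := lt_trans hcδ hξ.1
  have hξpos : 0 < ξ := lt_trans hr2 hξr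
  -- turn slope equalities into product equalities
  rw [eq_div_iff (by linarith : (r + ε) - (r - ε) ≠ 0)] at hceq
  rw [eq_div_iff (by linarith : (c + δ) - (c - δ) ≠ 0)] at hξeq
  have e1 : f (r + ε) - f (r - ε) =
      2 * ε * (p * (c + δ) ^ (p - 1) - p * (c - δ) ^ (p - 1)) := by
    linear_combination -hceq
  have e2 : (c + δ) ^ (p - 1) - (c - δ) ^ (p - 1) = 2 * δ * ((p - 1) * ξ ^ (p - 1 - 1)) := by
    linear_combination -hξeq
  -- identify Vquot with the second difference of f
  have habs : Vquot H ε δ r = (1 / (4 * ε * δ)) * (f (r + ε) - f (r - ε)) := by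
    have h1 : 0 < r + ε + δ := by linarith
    have h2 : 0 < r - ε - δ := by linarith
    have h3 : 0 < r - ε + δ := by linarith
    have h4 : 0 < r + ε - δ := by linarith
    simp only [Vquot, hf, abs_of_pos h1, abs_of_pos h2, abs_of_pos h3, abs_of_pos h4, ← hp]
    ring
  have key : Vquot H ε δ r = p * (p - 1) * ξ ^ (p - 2) := by
    rw [habs, e1, show p * (c + δ) ^ (p - 1) - p * (c - δ) ^ (p - 1)
        = p * ((c + δ) ^ (p - 1) - (c - δ) ^ (p - 1)) by ring, e2,
      show p - 1 - 1 = p - 2 by ring]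
    field_simp
    ring
  rw [key]
  have hξab : |p * (p - 1) * ξ ^ (p - 2)| = p * (1 - p) * ξ ^ (p - 2) := by
    rw [abs_mul, abs_mul, abs_of_pos hp0, abs_of_neg (by linarith : p - 1 < 0),
      abs_of_pos (Real.rpow_pos_of_pos hξpos _)]
    ring
  rw [hξab]
  have hb : ξ ^ (p - 2) ≤ (r / 2) ^ (p - 2) :=
    Real.rpow_le_rpow_of_nonpos hr2 hξr.le (by linarith)
  have hrw : (r / 2) ^ (p - 2) = 2 ^ (2 - p) * r ^ (p - 2) := by
    rw [Real.div_rpow hr.le (by norm_num : (0:ℝ) ≤ 2), div_eq_mul_inv,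
      ← Real.rpow_neg (by norm_num : (0:ℝ) ≤ 2), show -(p - 2) = 2 - p by ring]
    ring
  calc p * (1 - p) * ξ ^ (p - 2) ≤ p * (1 - p) * ((r / 2) ^ (p - 2)) := by
        apply mul_le_mul_of_nonneg_left hb
        nlinarith
    _ = p * (1 - p) * 2 ^ (2 - p) * r ^ (p - 2) := by rw [hrw]; ring
end
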